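/- Let G = (V, E) be a connected hedgegraph with hedgegraph polymatroid f and weak partition connectivity WPC_G. Then WPC_G ≤ k*(f), where k*(f) = min over A ⊆ E of ⌊ (Σ_{e∈E} (f(A ∪ {e}) − f(A))) / (f(E) − f(A)) ⌋ (convention 0/0 = +∞). -/

import Mathlib

open Finset

attribute [local instance] Classical.propDecidable

noncomputable section

variable {V E : Type*}

/-- The simple graph on `V` induced by the hyperedges of the hedges in `A`. -/
def hgGraph (hedge : E → Finset (Finset V)) (A : Finset E) : SimpleGraph V where
  Adj u v := u ≠ v ∧ ∃ e ∈ A, ∃ h ∈ hedge e, u ∈ h ∧ v ∈ h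
  symm := ⟨by
    rintro u v ⟨hne, e, he, h, hh, hu, hv⟩
    exact ⟨hne.symm, e, he, h, hh, hv, hu⟩⟩
  loopless := ⟨by rintro u ⟨hne, -⟩; exact hne rfl⟩

/-- Number of connected components of the sub-hedgegraph `(V, A)`. -/
def comps (hedge : E → Finset (Finset V)) (A : Finset E) : ℕ :=
  Nat.card (hgGraph hedge A).ConnectedComponent

/-- The hedgegraph polymatroid `f(A) = |V| - #Comps(V,A)`. -/
def fH [Fintype V] (hedge : E → Finset (Finset V)) (A : Finset E) : ℕ :=
  Fintype.card V - comps hedge A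

/-- Hedges crossing the vertex set `S`. -/
def vertexCut [Fintype V] [DecidableEq V] [Fintype E]
    (hedge : E → Finset (Finset V)) (S : Finset V) : Finset E :=
  univ.filter fun e => ∃ h ∈ hedge e, (h ∩ S).Nonempty ∧ (h ∩ (univ \ S)).Nonempty

/-- Connectivity of the hedgegraph: the minimum size of `δ(S)` over nonempty proper
vertex sets `S`. -/
def hconnectivity [Fintype V] [DecidableEq V] [Fintype E]
    (hedge : E → Finset (Finset V)) : ℕ :=
  sInf {k | ∃ S : Finset V, S.Nonempty ∧ S ≠ univ ∧ k = (vertexCut hedge S).card}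

/-- The contraction of the one-hedge hedgegraph `(V,{e})` along the partition `P`: the
graph on the parts of `P`, two parts being adjacent if some hyperedge of `e` meets
both. -/
def contractGraph [Fintype V] [DecidableEq V] (hedge : E → Finset (Finset V)) (e : E)
    (P : Finpartition (univ : Finset V)) : SimpleGraph {p // p ∈ P.parts} where
  Adj p q := p ≠ q ∧ ∃ h ∈ hedge e, (h ∩ p.1).Nonempty ∧ (h ∩ q.1).Nonempty
  symm := ⟨by rintro p q ⟨hne, h, hh, hp, hq⟩; exact ⟨hne.symm, h, hh, hq, hp⟩⟩
  loopless := ⟨by rintro p ⟨hne, -⟩; exact hne rfl⟩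

/-- `#Comps(P(e))`: number of connected components of the contraction of `(V,{e})`
along `P`. -/
def compsContract [Fintype V] [DecidableEq V] (hedge : E → Finset (Finset V)) (e : E)
    (P : Finpartition (univ : Finset V)) : ℕ :=
  Nat.card (contractGraph hedge e P).ConnectedComponent

/-- Weak partition connectivity. -/
def wpc [Fintype V] [DecidableEq V] [Fintype E] (hedge : E → Finset (Finset V)) : ℕ :=
  sInf {k | ∃ P : Finpartition (univ : Finset V), 2 ≤ P.parts.card ∧
    k = (∑ e : E, (P.parts.card - compsContract hedge e P)) / (P.parts.card - 1)}

/-- Functional strength of the hedgegraph polymatroid. -/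
def kstar [Fintype V] [DecidableEq V] [Fintype E] [DecidableEq E]
    (hedge : E → Finset (Finset V)) : ℕ :=
  sInf {k | ∃ A : Finset E, fH hedge A < fH hedge (univ : Finset E) ∧
    k = (∑ e : E, (fH hedge (insert e A) - fH hedge A)) /
      (fH hedge (univ : Finset E) - fH hedge A)}

/-!
For `A` with `f(A) < f(E)`, let `P` be the partition of `V` into the components of `(V, A)`.
Then `|P| = #Comps(V, A) ≥ 2`, and contracting `(V, {e})` along `P` has exactly
`#Comps(V, A ∪ {e})` components, since a path in `(V, A ∪ {e})` is a path in the contraction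
once each component of `(V, A)` is shrunk to a point. Hence the ratio of `A` in `k*(f)` is the
ratio of `P` in `WPC_G`. If no such `A` exists, then `|V| ≤ 1` and both sides are `0`.
-/

namespace SimpleGraph

variable {V W : Type*} {G : SimpleGraph V} {H : SimpleGraph W}

theorem natCard_connectedComponent_eq_of_reachable_iff_eq (π : V → W)
    (hπ : Function.Surjective π) (h : ∀ u v, G.Reachable u v ↔ π u = π v) :
    Nat.card G.ConnectedComponent = Nat.card W := by
  refine Nat.card_eq_of_bijective (Quot.lift π fun u v huv => (h u v).1 huv) ⟨?_, ?_⟩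
  · intro c d
    exact ConnectedComponent.ind₂ (fun u v huv => ConnectedComponent.sound ((h u v).2 huv)) c d
  · intro w
    obtain ⟨v, rfl⟩ := hπ w
    exact ⟨G.connectedComponentMk v, rfl⟩

theorem natCard_connectedComponent_eq_of_reachable_iff (π : V → W)
    (hπ : Function.Surjective π) (h : ∀ u v, G.Reachable u v ↔ H.Reachable (π u) (π v)) :
    Nat.card G.ConnectedComponent = Nat.card H.ConnectedComponent :=
  natCard_connectedComponent_eq_of_reachable_iff_eq (H.connectedComponentMk ∘ π)
    (Quot.mk_surjective.comp hπ) fun u v => (h u v).trans ConnectedComponent.eq.symm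

theorem reachable_iff_reachable_of_surjective (π : V → W) (hπ : Function.Surjective π)
    (hfib : ∀ u v, π u = π v → G.Reachable u v)
    (hG : ∀ u v, G.Adj u v → H.Reachable (π u) (π v))
    (hH : ∀ u v, H.Adj (π u) (π v) → G.Reachable u v) (u v : V) :
    G.Reachable u v ↔ H.Reachable (π u) (π v) := by
  constructor
  · rintro ⟨w⟩
    induction w with
    | nil => rfl
    | cons hadj _ ih => exact (hG _ _ hadj).trans ih
  · rintro ⟨w⟩
    suffices ∀ {p q} (w : H.Walk p q) u v, π u = p → π v = q → G.Reachable u v from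
      this w u v rfl rfl
    intro p q w
    induction w with
    | nil => rintro u v rfl hv; exact hfib u v hv.symm
    | @cons _ m _ hadj _ ih =>
      rintro u v rfl rfl
      obtain ⟨x, rfl⟩ := hπ m
      exact (hH u x hadj).trans (ih x v rfl rfl)

end SimpleGraph

namespace Finpartition

variable {α : Type*} [Fintype α] [DecidableEq α]

def partOf (P : Finpartition (univ : Finset α)) (a : α) : P.parts :=
  ⟨P.part a, P.part_mem.mpr (mem_univ a)⟩

theorem partOf_surjective (P : Finpartition (univ : Finset α)) : Function.Surjective P.partOf := by
  rintro ⟨p, hp⟩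
  obtain ⟨a, ha⟩ := P.nonempty_of_mem_parts hp
  exact ⟨a, Subtype.ext (P.part_eq_of_mem hp ha)⟩

end Finpartition

section Hedgegraph

variable (hedge : E → Finset (Finset V))

theorem hgGraph_mono {A B : Finset E} (h : A ⊆ B) : hgGraph hedge A ≤ hgGraph hedge B := by
  rintro u v ⟨hne, e, he, rest⟩
  exact ⟨hne, e, h he, rest⟩

theorem hgGraph_reachable_of_mem {A : Finset E} {e : E} (he : e ∈ A) {h : Finset V}
    (hh : h ∈ hedge e) {a b : V} (ha : a ∈ h) (hb : b ∈ h) : (hgGraph hedge A).Reachable a b := by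
  by_cases hab : a = b
  · exact hab ▸ .rfl
  · exact SimpleGraph.Adj.reachable ⟨hab, e, he, h, hh, ha, hb⟩

variable [Fintype V]

theorem comps_mono {A B : Finset E} (h : A ⊆ B) : comps hedge B ≤ comps hedge A :=
  SimpleGraph.ConnectedComponent.card_le_card_of_le (hgGraph_mono hedge h)

theorem comps_empty : comps hedge (∅ : Finset E) = Fintype.card V := by
  rw [comps, ← Nat.card_eq_fintype_card]
  refine SimpleGraph.natCard_connectedComponent_eq_of_reachable_iff_eq id
    Function.surjective_id fun u v => ?_
  have hbot : hgGraph hedge (∅ : Finset E) = ⊥ := by ext; simp [hgGraph]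
  rw [hbot, SimpleGraph.reachable_bot, id, id]

variable [DecidableEq V]

def compPart (A : Finset E) : Finpartition (univ : Finset V) :=
  Finpartition.ofSetoid (hgGraph hedge A).reachableSetoid

theorem mem_compPart_part_iff {A : Finset E} {a b : V} :
    b ∈ (compPart hedge A).part a ↔ (hgGraph hedge A).Reachable a b :=
  Finpartition.mem_part_ofSetoid_iff_rel

theorem compPart_partOf_eq_iff {A : Finset E} {a b : V} :
    (compPart hedge A).partOf a = (compPart hedge A).partOf b ↔
      (hgGraph hedge A).Reachable a b := by
  rw [Finpartition.partOf, Finpartition.partOf, Subtype.mk.injEq,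
    ← Finpartition.mem_part_iff_part_eq_part _ (mem_univ a) (mem_univ b),
    mem_compPart_part_iff, SimpleGraph.reachable_comm]

theorem card_compPart_parts (A : Finset E) : (compPart hedge A).parts.card = comps hedge A := by
  rw [comps, ← Nat.card_eq_finsetCard]
  exact (SimpleGraph.natCard_connectedComponent_eq_of_reachable_iff_eq _
    (Finpartition.partOf_surjective _) fun _ _ => (compPart_partOf_eq_iff hedge).symm).symm

theorem comps_le_card (A : Finset E) : comps hedge A ≤ Fintype.card V := by
  rw [← card_compPart_parts, ← card_univ]
  exact Finpartition.card_parts_le_card _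

theorem compsContract_compPart [DecidableEq E] (A : Finset E) (e : E) :
    compsContract hedge e (compPart hedge A) = comps hedge (insert e A) := by
  set P := compPart hedge A
  have hA : hgGraph hedge A ≤ hgGraph hedge (insert e A) := hgGraph_mono hedge (subset_insert e A)
  have hfib : ∀ u v, P.partOf u = P.partOf v → (hgGraph hedge (insert e A)).Reachable u v :=
    fun u v huv => ((compPart_partOf_eq_iff hedge).1 huv).mono hA
  symm
  refine SimpleGraph.natCard_connectedComponent_eq_of_reachable_iff P.partOf
    P.partOf_surjective (SimpleGraph.reachable_iff_reachable_of_surjective _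
      P.partOf_surjective hfib ?_ ?_)
  · rintro u v ⟨-, f, hf, h, hh, hu, hv⟩
    by_cases huv : P.partOf u = P.partOf v
    · rw [huv]
    rcases mem_insert.1 hf with rfl | hfA
    · exact SimpleGraph.Adj.reachable ⟨huv, h, hh, ⟨u, mem_inter.2 ⟨hu, P.mem_part (mem_univ u)⟩⟩,
        ⟨v, mem_inter.2 ⟨hv, P.mem_part (mem_univ v)⟩⟩⟩
    · exact absurd ((compPart_partOf_eq_iff hedge).2
        (hgGraph_reachable_of_mem hedge hfA hh hu hv)) huv
  · rintro u v ⟨-, h, hh, ⟨a, ha⟩, ⟨b, hb⟩⟩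
    rw [mem_inter] at ha hb
    have hua := ((mem_compPart_part_iff hedge).1 ha.2).mono hA
    have hvb := ((mem_compPart_part_iff hedge).1 hb.2).mono hA
    exact hua.trans ((hgGraph_reachable_of_mem hedge (mem_insert_self e A) hh ha.1 hb.1).trans
      hvb.symm)

end Hedgegraph

section WeakPartitionConnectivity

variable [Fintype V] [DecidableEq V] [Fintype E] (hedge : E → Finset (Finset V))

theorem wpc_eq_zero_of_card_le_one (hV : Fintype.card V ≤ 1) : wpc hedge = 0 := by
  rw [wpc, Nat.sInf_eq_zero]
  refine Or.inr (Set.eq_empty_of_forall_notMem ?_)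
  rintro k ⟨P, hP, -⟩
  have := P.card_parts_le_card
  rw [card_univ] at this
  omega

theorem wpc_le_of_fH_lt [DecidableEq E] (hconn : comps hedge (univ : Finset E) = 1)
    {A : Finset E} (hA : fH hedge A < fH hedge univ) :
    wpc hedge ≤ (∑ e : E, (fH hedge (insert e A) - fH hedge A)) /
      (fH hedge (univ : Finset E) - fH hedge A) := by
  set P := compPart hedge A
  have hP : P.parts.card = comps hedge A := card_compPart_parts hedge A
  have hAV := comps_le_card hedge A
  simp only [fH, hconn] at hA ⊢
  apply Nat.sInf_le
  refine ⟨P, by omega, ?_⟩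
  have hnum : ∀ e, Fintype.card V - comps hedge (insert e A) - (Fintype.card V - comps hedge A)
      = P.parts.card - compsContract hedge e P := fun e => by
    have := comps_mono hedge (subset_insert e A)
    rw [compsContract_compPart]
    omega
  rw [Finset.sum_congr rfl fun e _ => hnum e]
  congr 1
  omega

end WeakPartitionConnectivity

/-- For a connected hedgegraph, `WPC ≤ k*(f)` where `k*` is the
functional strength of the hedgegraph polymatroid. -/
theorem wpc_le_functional_strength [Fintype V] [DecidableEq V]
    [Fintype E] [DecidableEq E] (hedge : E → Finset (Finset V))
    (hconn : comps hedge (univ : Finset E) = 1) :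
    wpc hedge ≤ kstar hedge := by
  rcases Set.eq_empty_or_nonempty {k | ∃ A : Finset E, fH hedge A < fH hedge univ ∧
      k = (∑ e : E, (fH hedge (insert e A) - fH hedge A)) / (fH hedge univ - fH hedge A)}
    with hS | hS
  · have hV : Fintype.card V ≤ 1 := by
      have hempty : ¬ fH hedge ∅ < fH hedge univ := fun h => hS.subset ⟨∅, h, rfl⟩
      rw [fH, fH, comps_empty, hconn] at hempty
      omega
    rw [wpc_eq_zero_of_card_le_one hedge hV]
    exact Nat.zero_le _
  · obtain ⟨A, hA, hk⟩ := Nat.sInf_mem hS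
    rw [kstar, hk]
    exact wpc_le_of_fH_lt hedge hconn hA

end
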